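/- arXiv:0904.2626 — 6 statements merged into one kernel-verified Lean document; each statement's English description precedes it below -/
import Mathlib

section
/- The self-homeomorphisms x_i (i ≥ 0) of the non-negative reals, defined by t·x_i = t for t ≤ i, t·x_i = i + 2(t−i) for i ≤ t ≤ i+1, and t·x_i = t+1 for t ≥ i+1 (acting on the right), satisfy the relations x_j x_i = x_i x_{j+1} whenever i < j. -/
/-- The standard generators of Thompson's group `F`, acting on `ℝ≥0` (right action):
`t·x_i = t` for `t ≤ i`, `t·x_i = i + 2(t−i)` for `i ≤ t ≤ i+1`, `t·x_i = t+1` for `t ≥ i+1`. -/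
noncomputable def xF (i : ℕ) (t : ℝ) : ℝ :=
  if t ≤ i then t else if t ≤ i + 1 then i + 2 * (t - i) else t + 1

/-!
`x_i` is the identity on `[0, i]`, the translation by `1` on `[i+1, ∞)`, and moves no point by
more than `1`; moreover `x_{j+1}` is the conjugate of `x_j` by the translation. Let `i < j`. For
`t ≤ j` both sides equal `t·x_i`, since `x_j` fixes `t` and `x_{j+1}` fixes `t·x_i ≤ j + 1`. For
`t ≥ j` the translation `x_i` is applied to `t` and to `t·x_j ≥ t`, so both sides equal
`t·x_j + 1`.
-/

namespace xF

theorem eq_self_of_le {i : ℕ} {t : ℝ} (h : t ≤ i) : xF i t = t := by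
  simp [xF, h]

theorem eq_add_one_of_le {i : ℕ} {t : ℝ} (h : (i : ℝ) + 1 ≤ t) : xF i t = t + 1 := by
  unfold xF
  split_ifs <;> linarith

theorem self_le (i : ℕ) (t : ℝ) : t ≤ xF i t := by
  unfold xF
  split_ifs <;> linarith

theorem le_add_one (i : ℕ) (t : ℝ) : xF i t ≤ t + 1 := by
  unfold xF
  split_ifs <;> linarith

theorem succ_add_one (i : ℕ) (t : ℝ) : xF (i + 1) (t + 1) = xF i t + 1 := by
  unfold xF
  push_cast
  split_ifs <;> linarith

end xF

/-- The relations `x_j x_i = x_i x_{j+1}` for `i < j` (right action: `x_j` applied first on the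
left-hand side, `x_i` first on the right-hand side). -/
theorem xF_relation (i j : ℕ) (hij : i < j) :
    ∀ t : ℝ, 0 ≤ t → xF i (xF j t) = xF (j + 1) (xF i t) := by
  intro t _
  have hij_real : (i : ℝ) + 1 ≤ j := by exact_mod_cast hij
  rcases le_total t j with htj | hjt
  · have hxi : xF i t ≤ (j + 1 : ℕ) := by
      push_cast
      linarith [xF.le_add_one i t]
    rw [xF.eq_self_of_le htj, xF.eq_self_of_le hxi]
  · have hxj : (i : ℝ) + 1 ≤ xF j t := by linarith [xF.self_le j t]
    have hit : (i : ℝ) + 1 ≤ t := by linarith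
    rw [xF.eq_add_one_of_le hxj, xF.eq_add_one_of_le hit, xF.succ_add_one]
end

section
/- In Thompson's group F with infinite presentation ⟨x_0, x_1, ... | x_j x_i = x_i x_{j+1}, i < j⟩, for every integer i ≥ 1 one has c^{i} = x_0² x_1^{2i} x_{2i+1}^{-2} x_{2i-1}^{-2} ⋯ x_5^{-2} x_3^{-2} x_0^{-2}, where c = x_0² x_1² x_3^{-2} x_0^{-2}. -/
/-!
The relations say that conjugation by `x_1` sends `x_m` to `x_{m+1}` for `m ≥ 2`. Hence
`c = x_0² d x_0⁻²` with `d = x_1² x_3⁻²`, and in `dⁱ⁺¹ = dⁱ d` the factor `x_1²` of the new `d`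
moves left past the odd generators collected so far, raising each of their indices by `2`.
-/

/-- The defining relators of Thompson's group `F`:
`x_j x_i x_{j+1}⁻¹ x_i⁻¹` for `i < j`, encoding `x_j x_i = x_i x_{j+1}`. -/
def thompsonRels : Set (FreeGroup ℕ) :=
  {r | ∃ i j : ℕ, i < j ∧
    r = FreeGroup.of j * FreeGroup.of i * (FreeGroup.of (j + 1))⁻¹ * (FreeGroup.of i)⁻¹}

/-- Thompson's group `F`, via its infinite presentation
`⟨x_0, x_1, … | x_j x_i = x_i x_{j+1} for i < j⟩`. -/
abbrev ThompsonF : Type := PresentedGroup thompsonRels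

/-- The generator `x_n` of Thompson's group `F`. -/
def x (n : ℕ) : ThompsonF := PresentedGroup.of n

theorem x_mul_x_of_lt {i j : ℕ} (h : i < j) : x j * x i = x i * x (j + 1) := by
  have hrel : x j * x i * (x (j + 1))⁻¹ * (x i)⁻¹ = 1 :=
    (QuotientGroup.eq_one_iff _).mpr (Subgroup.subset_normalClosure ⟨i, j, h, rfl⟩)
  rw [← mul_inv_eq_one, mul_inv_rev, ← mul_assoc]
  exact hrel

theorem conj_x_pow_x_of_lt {i j : ℕ} (h : i < j) (n : ℕ) :
    MulAut.conj (x i ^ n)⁻¹ (x j) = x (j + n) := by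
  induction n with
  | zero => simp
  | succ n ih =>
    rw [MulAut.conj_apply, inv_inv] at ih ⊢
    calc (x i ^ (n + 1))⁻¹ * x j * x i ^ (n + 1)
        = (x i)⁻¹ * ((x i ^ n)⁻¹ * x j * x i ^ n) * x i := by group
      _ = x (j + (n + 1)) := by
        rw [ih, mul_assoc, x_mul_x_of_lt (by omega), inv_mul_cancel_left, add_assoc]

def oddDescProd (i : ℕ) : ThompsonF :=
  ((List.range i).map (fun k => x (2 * i + 1 - 2 * k) ^ (-2 : ℤ))).prod

theorem oddDescProd_succ (i : ℕ) :
    oddDescProd (i + 1) = MulAut.conj (x 1 ^ 2)⁻¹ (oddDescProd i) * x 3 ^ (-2 : ℤ) := by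
  simp only [oddDescProd, map_list_prod, List.map_map, List.range_succ, List.map_append,
    List.prod_append]
  congr 1
  · refine congrArg List.prod (List.map_congr_left fun k hk => ?_)
    rw [List.mem_range] at hk
    rw [Function.comp_apply, map_zpow, conj_x_pow_x_of_lt (by omega)]
    congr 2
    omega
  · simp [show 2 * (i + 1) + 1 - 2 * i = 3 by omega]

theorem x_one_sq_mul_x_three_zpow_pow (i : ℕ) :
    (x 1 ^ 2 * x 3 ^ (-2 : ℤ)) ^ i = x 1 ^ (2 * i) * oddDescProd i := by
  induction i with
  | zero => simp [oddDescProd]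
  | succ i ih =>
    rw [pow_succ, ih, oddDescProd_succ, MulAut.conj_apply, inv_inv, mul_add, pow_add]
    group

theorem c_pow_normal_form_general (i : ℕ) (c : ThompsonF)
    (hc : c = x 0 ^ 2 * x 1 ^ 2 * (x 3) ^ (-2 : ℤ) * (x 0) ^ (-2 : ℤ)) :
    c ^ i = x 0 ^ 2 * x 1 ^ (2 * i) *
      ((List.range i).map (fun k => (x (2 * i + 1 - 2 * k)) ^ (-2 : ℤ))).prod *
      (x 0) ^ (-2 : ℤ) := by
  have hc_conj : c = MulAut.conj (x 0 ^ 2) (x 1 ^ 2 * x 3 ^ (-2 : ℤ)) := by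
    rw [hc, MulAut.conj_apply, ← zpow_natCast, ← zpow_neg]
    group
  rw [hc_conj, ← map_pow, x_one_sq_mul_x_three_zpow_pow, MulAut.conj_apply, ← zpow_natCast (x 0),
    ← zpow_neg, oddDescProd]
  group

/-- With `c = x_0² x_1² x_3⁻² x_0⁻²`, for every `i ≥ 1` one has
`cⁱ = x_0² x_1^{2i} x_{2i+1}⁻² x_{2i-1}⁻² ⋯ x_5⁻² x_3⁻² x_0⁻²`
(the middle factor is the descending product of the odd-index generators
`x_{2i+1}, x_{2i-1}, …, x_3`, each to the power `−2`). -/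
theorem c_pow_normal_form (i : ℕ) (hi : 1 ≤ i) (c : ThompsonF)
    (hc : c = x 0 ^ 2 * x 1 ^ 2 * (x 3) ^ (-2 : ℤ) * (x 0) ^ (-2 : ℤ)) :
    c ^ i = x 0 ^ 2 * x 1 ^ (2 * i) *
      ((List.range i).map (fun k => (x (2 * i + 1 - 2 * k)) ^ (-2 : ℤ))).prod *
      (x 0) ^ (-2 : ℤ) :=
  c_pow_normal_form_general i c hc
end

section
/- In Thompson's group F (infinite presentation), let i ≥ 1, z = x_0^4 x_1^{2i} x_4 x_{2i+6} x_{2i+5}^{-2} x_2^{-2i} x_0^{-4}, w = x_0^4 x_1^{2i} x_2 x_5 x_{2i+6} x_{2i+8} x_{2i+7}^{-2} x_{2i+5}^{-1} x_3^{-1} x_2^{-2i} x_0^{-4}, and p = z^{-1} w. Then p = x_0³ x_1^{2i+1} x_{2i+5}³ x_{2i+6}^{-2} x_{2i+4}^{-1} x_2^{-1} x_1^{-2i} x_0^{-3}. -/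
namespace ThompsonF

theorem x_mul_x_of_lt {i j : ℕ} (h : i < j) : x j * x i = x i * x (j + 1) := by
  have := PresentedGroup.one_of_mem (rels := thompsonRels) ⟨i, j, h, rfl⟩
  simp only [map_mul, map_inv] at this
  exact mul_inv_eq_one.mp (mul_inv_eq_one.mp this)

def shift : ThompsonF →* ThompsonF :=
  PresentedGroup.toGroup (f := fun k => x (k + 1)) <| by
    rintro _ ⟨i, j, hij, rfl⟩
    simp [x_mul_x_of_lt (Nat.succ_lt_succ hij)]

@[simp]
theorem shift_x (k : ℕ) : shift (x k) = x (k + 1) :=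
  PresentedGroup.toGroup.of _

def tail (m : ℕ) : Subgroup ThompsonF :=
  Subgroup.closure (x '' Set.Ici m)

theorem x_mem_tail {m k : ℕ} (h : m ≤ k) : x k ∈ tail m :=
  Subgroup.subset_closure ⟨k, h, rfl⟩

section BlockMoves

variable {m : ℕ} {g : ThompsonF}

theorem mul_x_of_mem_tail (hg : g ∈ tail (m + 1)) : g * x m = x m * shift g := by
  have hgen : Set.EqOn (MulAut.conj (x m)⁻¹).toMonoidHom shift (x '' Set.Ici (m + 1)) := by
    rintro _ ⟨k, hk, rfl⟩
    rw [MulEquiv.coe_toMonoidHom, MulAut.conj_apply, inv_inv, mul_assoc,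
      x_mul_x_of_lt (Nat.lt_of_succ_le hk), inv_mul_cancel_left, shift_x]
  have hconj := MonoidHom.eqOn_closure hgen hg
  simp only [MulEquiv.coe_toMonoidHom, MulAut.conj_apply, inv_inv] at hconj
  rw [← hconj]
  group

theorem x_inv_mul_of_mem_tail (hg : g ∈ tail (m + 1)) :
    (x m)⁻¹ * g = shift g * (x m)⁻¹ := by
  rw [inv_mul_eq_iff_eq_mul, ← mul_assoc, ← mul_x_of_mem_tail hg, mul_inv_cancel_right]

theorem x_mul_shift_mul_x_inv_of_mem_tail (hg : g ∈ tail (m + 1)) :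
    x m * shift g * (x m)⁻¹ = g := by
  rw [← mul_x_of_mem_tail hg, mul_inv_cancel_right]

end BlockMoves

section Identity

variable (n : ℕ)

theorem middle_inv_mul_middle :
    (x 4 * x (n + 6) * (x (n + 5) ^ 2)⁻¹)⁻¹ *
        (x 2 * x 5 * x (n + 6) * x (n + 8) * (x (n + 7) ^ 2)⁻¹ * (x (n + 5))⁻¹ * (x 3)⁻¹) =
      x 2 * (x 3)⁻¹ * (x (n + 5) ^ 3 * (x (n + 6) ^ 2)⁻¹ * (x (n + 4))⁻¹) := by
  have h₁ : x (n + 5) ^ 2 * (x (n + 6))⁻¹ * (x 4)⁻¹ ∈ tail 3 := by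
    apply_rules only [Subgroup.mul_mem, Subgroup.inv_mem, Subgroup.pow_mem, x_mem_tail]
    all_goals omega
  have h₂ : (x (n + 7))⁻¹ ∈ tail (n + 7) := Subgroup.inv_mem _ (x_mem_tail le_rfl)
  have h₃ : x (n + 5) ^ 3 * (x (n + 6) ^ 2)⁻¹ * (x (n + 4))⁻¹ ∈ tail 4 := by
    apply_rules only [Subgroup.mul_mem, Subgroup.inv_mem, Subgroup.pow_mem, x_mem_tail]
    all_goals omega
  calc _ = x (n + 5) ^ 2 * (x (n + 6))⁻¹ * (x 4)⁻¹ * x 2 * x 5 * x (n + 6) * x (n + 8) *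
          (x (n + 7) ^ 2)⁻¹ * (x (n + 5))⁻¹ * (x 3)⁻¹ := by group
    _ = x 2 * (x (n + 6) ^ 2 * (x (n + 7))⁻¹ * (x 5)⁻¹) * x 5 * x (n + 6) * x (n + 8) *
          (x (n + 7) ^ 2)⁻¹ * (x (n + 5))⁻¹ * (x 3)⁻¹ := by
      rw [mul_x_of_mem_tail h₁]; simp only [map_mul, map_inv, map_pow, shift_x]
    _ = x 2 * x (n + 6) ^ 2 * ((x (n + 7))⁻¹ * x (n + 6)) * x (n + 8) *
          (x (n + 7) ^ 2)⁻¹ * (x (n + 5))⁻¹ * (x 3)⁻¹ := by group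
    _ = x 2 * x (n + 6) ^ 2 * (x (n + 6) * (x (n + 8))⁻¹) * x (n + 8) *
          (x (n + 7) ^ 2)⁻¹ * (x (n + 5))⁻¹ * (x 3)⁻¹ := by
      rw [mul_x_of_mem_tail h₂]; simp only [map_inv, shift_x]
    _ = x 2 * (shift (x (n + 5) ^ 3 * (x (n + 6) ^ 2)⁻¹ * (x (n + 4))⁻¹) * (x 3)⁻¹) := by
      simp only [map_mul, map_inv, map_pow, shift_x]; group
    _ = _ := by rw [← x_inv_mul_of_mem_tail h₃]; group

theorem x_zero_mul_middle_mul_x_zero_inv :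
    x 0 * (x 2 * (x 3)⁻¹ * (x (n + 5) ^ 3 * (x (n + 6) ^ 2)⁻¹ * (x (n + 4))⁻¹)) * (x 0)⁻¹ =
      x 1 * (x (n + 5) ^ 3 * (x (n + 6) ^ 2)⁻¹ * (x (n + 4))⁻¹) * (x 2)⁻¹ := by
  have h₁ : x (n + 4) ^ 3 * (x (n + 5) ^ 2)⁻¹ * (x (n + 3))⁻¹ ∈ tail 3 := by
    apply_rules only [Subgroup.mul_mem, Subgroup.inv_mem, Subgroup.pow_mem, x_mem_tail]
    all_goals omega
  have h₀ : x 1 * (x 2)⁻¹ * (x (n + 4) ^ 3 * (x (n + 5) ^ 2)⁻¹ * (x (n + 3))⁻¹) ∈ tail 1 := by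
    apply_rules only [Subgroup.mul_mem, Subgroup.inv_mem, Subgroup.pow_mem, x_mem_tail]
    all_goals omega
  calc _ = x 0 * shift (x 1 * (x 2)⁻¹ * (x (n + 4) ^ 3 * (x (n + 5) ^ 2)⁻¹ * (x (n + 3))⁻¹)) *
        (x 0)⁻¹ := by simp only [map_mul, map_inv, map_pow, shift_x]
    _ = x 1 * ((x 2)⁻¹ * (x (n + 4) ^ 3 * (x (n + 5) ^ 2)⁻¹ * (x (n + 3))⁻¹)) := by
      rw [x_mul_shift_mul_x_inv_of_mem_tail h₀, mul_assoc]
    _ = _ := by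
      rw [x_inv_mul_of_mem_tail h₁, ← mul_assoc]; simp only [map_mul, map_inv, map_pow, shift_x]

theorem x_zero_pow_four_mul_x_two_pow : x 0 ^ 4 * x 2 ^ n = x 0 ^ 3 * x 1 ^ n * x 0 := by
  have h : x 1 ^ n ∈ tail 1 := Subgroup.pow_mem _ (x_mem_tail le_rfl) n
  rw [mul_assoc, mul_x_of_mem_tail h, map_pow, shift_x, ← mul_assoc, ← pow_succ]

theorem inv_mul_eq_normal_form :
    (x 0 ^ 4 * x 1 ^ n * x 4 * x (n + 6) * (x (n + 5)) ^ (-2 : ℤ) *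
      (x 2) ^ (-(n : ℤ)) * (x 0) ^ (-4 : ℤ))⁻¹ *
    (x 0 ^ 4 * x 1 ^ n * x 2 * x 5 * x (n + 6) * x (n + 8) *
      (x (n + 7)) ^ (-2 : ℤ) * (x (n + 5))⁻¹ * (x 3)⁻¹ *
      (x 2) ^ (-(n : ℤ)) * (x 0) ^ (-4 : ℤ)) =
      x 0 ^ 3 * x 1 ^ (n + 1) * (x (n + 5)) ^ 3 * (x (n + 6)) ^ (-2 : ℤ) *
        (x (n + 4))⁻¹ * (x 2)⁻¹ * (x 1) ^ (-(n : ℤ)) * (x 0) ^ (-3 : ℤ) := by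
  calc _ = (x 0 ^ 4 * x 2 ^ n) * ((x 4 * x (n + 6) * (x (n + 5) ^ 2)⁻¹)⁻¹ *
        (x 2 * x 5 * x (n + 6) * x (n + 8) * (x (n + 7) ^ 2)⁻¹ * (x (n + 5))⁻¹ * (x 3)⁻¹)) *
        (x 0 ^ 4 * x 2 ^ n)⁻¹ := by group
    _ = (x 0 ^ 3 * x 1 ^ n) * (x 0 * (x 2 * (x 3)⁻¹ *
        (x (n + 5) ^ 3 * (x (n + 6) ^ 2)⁻¹ * (x (n + 4))⁻¹)) * (x 0)⁻¹) *
        (x 0 ^ 3 * x 1 ^ n)⁻¹ := by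
      rw [middle_inv_mul_middle, x_zero_pow_four_mul_x_two_pow]; group
    _ = _ := by rw [x_zero_mul_middle_mul_x_zero_inv]; group

end Identity

end ThompsonF

theorem p_normal_form_general (i : ℕ) (z w : ThompsonF)
    (hz : z = x 0 ^ 4 * x 1 ^ (2 * i) * x 4 * x (2 * i + 6) * (x (2 * i + 5)) ^ (-2 : ℤ) *
      (x 2) ^ (-(2 * i : ℤ)) * (x 0) ^ (-4 : ℤ))
    (hw : w = x 0 ^ 4 * x 1 ^ (2 * i) * x 2 * x 5 * x (2 * i + 6) * x (2 * i + 8) *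
      (x (2 * i + 7)) ^ (-2 : ℤ) * (x (2 * i + 5))⁻¹ * (x 3)⁻¹ *
      (x 2) ^ (-(2 * i : ℤ)) * (x 0) ^ (-4 : ℤ)) :
    z⁻¹ * w =
      x 0 ^ 3 * x 1 ^ (2 * i + 1) * (x (2 * i + 5)) ^ 3 * (x (2 * i + 6)) ^ (-2 : ℤ) *
        (x (2 * i + 4))⁻¹ * (x 2)⁻¹ * (x 1) ^ (-(2 * i : ℤ)) * (x 0) ^ (-3 : ℤ) := by
  subst hz hw
  exact_mod_cast ThompsonF.inv_mul_eq_normal_form (2 * i)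

/-- With `z = x_0⁴ x_1^{2i} x_4 x_{2i+6} x_{2i+5}⁻² x_2^{-2i} x_0⁻⁴`,
`w = x_0⁴ x_1^{2i} x_2 x_5 x_{2i+6} x_{2i+8} x_{2i+7}⁻² x_{2i+5}⁻¹ x_3⁻¹ x_2^{-2i} x_0⁻⁴`
and `p = z⁻¹ w`, for `i ≥ 1` one has
`p = x_0³ x_1^{2i+1} x_{2i+5}³ x_{2i+6}⁻² x_{2i+4}⁻¹ x_2⁻¹ x_1^{-2i} x_0⁻³`. -/
theorem p_normal_form (i : ℕ) (hi : 1 ≤ i) (z w : ThompsonF)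
    (hz : z = x 0 ^ 4 * x 1 ^ (2 * i) * x 4 * x (2 * i + 6) * (x (2 * i + 5)) ^ (-2 : ℤ) *
      (x 2) ^ (-(2 * i : ℤ)) * (x 0) ^ (-4 : ℤ))
    (hw : w = x 0 ^ 4 * x 1 ^ (2 * i) * x 2 * x 5 * x (2 * i + 6) * x (2 * i + 8) *
      (x (2 * i + 7)) ^ (-2 : ℤ) * (x (2 * i + 5))⁻¹ * (x 3)⁻¹ *
      (x 2) ^ (-(2 * i : ℤ)) * (x 0) ^ (-4 : ℤ)) :
    z⁻¹ * w =
      x 0 ^ 3 * x 1 ^ (2 * i + 1) * (x (2 * i + 5)) ^ 3 * (x (2 * i + 6)) ^ (-2 : ℤ) *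
        (x (2 * i + 4))⁻¹ * (x 2)⁻¹ * (x 1) ^ (-(2 * i : ℤ)) * (x 0) ^ (-3 : ℤ) :=
  p_normal_form_general i z w hz hw
end

section
/- For m ≥ 1, the element g = (w_0^{-2} w_2^{2})(w_4^{-2} w_6^{2}) ⋯ (w_{4(m-1)}^{-2} w_{4(m-1)+2}^{2}) of Thompson's group F (ℝ≥0 model, where w_i = x_i x_{i+1}^{-1}) has support contained in [0, 4m], fixes every multiple of 4 in [0, 4m] and every odd multiple of 2 in [0, 4m], moves no point by more than 1, and satisfies t·g > t for t in (4k+2, 4k+4) and t·g < t for t in (4k, 4k+2) for each 0 ≤ k < m (so the multiples of 4 are attracting and the odd multiples of 2 are repelling fixed points of positive powers of g). -/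
/-- The inverse of `x_i`. -/
noncomputable def xFinv (i : ℕ) (t : ℝ) : ℝ :=
  if t ≤ i then t else if t ≤ i + 2 then i + (t - i) / 2 else t - 1

/-- `w_i = x_i x_{i+1}⁻¹` (right action: `x_i` applied first). -/
noncomputable def wF (i : ℕ) (t : ℝ) : ℝ := xFinv (i + 1) (xF i t)

/-- `w_i⁻¹ = x_{i+1} x_i⁻¹`. -/
noncomputable def wFinv (i : ℕ) (t : ℝ) : ℝ := xFinv i (xF (i + 1) t)

/-- The block `w_{4k}⁻² w_{4k+2}²` (right action). -/
noncomputable def block (k : ℕ) (t : ℝ) : ℝ :=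
  wF (4 * k + 2) (wF (4 * k + 2) (wFinv (4 * k) (wFinv (4 * k) t)))

/-- `g = (w_0⁻² w_2²)(w_4⁻² w_6²) ⋯ (w_{4(m-1)}⁻² w_{4(m-1)+2}²)` (right action). -/
noncomputable def gBlocks : ℕ → ℝ → ℝ
  | 0 => fun t => t
  | m + 1 => fun t => block m (gBlocks m t)

/-!
Each `w_i` is supported on `[i, i + 2]`, where it moves points to the right by at most `1/2`,
while `w_i⁻¹` moves them to the left by at most `1/2`. Hence the block `w_{4k}⁻² w_{4k+2}²` is
supported on `[4k, 4k + 4]`, pulls `(4k, 4k + 2)` to the left and pushes `(4k + 2, 4k + 4)` to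
the right, by at most `1` in each case. The blocks have pairwise almost disjoint supports, so `g`
agrees with the `k`-th block on `[4k, 4k + 4]` and is the identity outside `[0, 4m]`.
-/

section Generators

variable (i : ℕ) {t : ℝ}

lemma wF_of_le (h : t ≤ i) : wF i t = t := by
  simp only [wF, xF, xFinv]; push_cast; split_ifs <;> linarith

lemma wF_of_ge (h : (i : ℝ) + 2 ≤ t) : wF i t = t := by
  simp only [wF, xF, xFinv]; push_cast; split_ifs <;> linarith

lemma wFinv_of_le (h : t ≤ i) : wFinv i t = t := by
  simp only [wFinv, xF, xFinv]; push_cast; split_ifs <;> linarith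

lemma wFinv_of_ge (h : (i : ℝ) + 2 ≤ t) : wFinv i t = t := by
  simp only [wFinv, xF, xFinv]; push_cast; split_ifs <;> linarith

lemma wF_mem_Ioo (h₁ : (i : ℝ) < t) (h₂ : t < i + 2) :
    wF i t ∈ Set.Ioo t (i + 2) ∧ wF i t ≤ t + 1 / 2 := by
  simp only [wF, xF, xFinv, Set.mem_Ioo]; push_cast
  refine ⟨⟨?_, ?_⟩, ?_⟩ <;> split_ifs <;> linarith

lemma wFinv_mem_Ioo (h₁ : (i : ℝ) < t) (h₂ : t < i + 2) :
    wFinv i t ∈ Set.Ioo (i : ℝ) t ∧ t - 1 / 2 ≤ wFinv i t := by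
  simp only [wFinv, xF, xFinv, Set.mem_Ioo]; push_cast
  refine ⟨⟨?_, ?_⟩, ?_⟩ <;> split_ifs <;> linarith

end Generators

section Block

variable (k : ℕ) {t : ℝ}

lemma block_of_le (h : t ≤ 4 * k) : block k t = t := by
  have h₀ : t ≤ (4 * k : ℕ) := by push_cast; linarith
  have h₂ : t ≤ (4 * k + 2 : ℕ) := by push_cast; linarith
  simp only [block, wFinv_of_le _ h₀, wF_of_le _ h₂]

lemma block_of_ge (h : 4 * (k : ℝ) + 4 ≤ t) : block k t = t := by
  have h₀ : ((4 * k : ℕ) : ℝ) + 2 ≤ t := by push_cast; linarith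
  have h₂ : ((4 * k + 2 : ℕ) : ℝ) + 2 ≤ t := by push_cast; linarith
  simp only [block, wFinv_of_ge _ h₀, wF_of_ge _ h₂]

lemma block_four_mul_add_two : block k (4 * k + 2) = 4 * k + 2 := by
  have h₀ : ((4 * k : ℕ) : ℝ) + 2 ≤ 4 * k + 2 := by push_cast; rfl
  have h₂ : 4 * (k : ℝ) + 2 ≤ (4 * k + 2 : ℕ) := by push_cast; rfl
  simp only [block, wFinv_of_ge _ h₀, wF_of_le _ h₂]

lemma block_mem_Ioo_of_lt (h₁ : 4 * (k : ℝ) < t) (h₂ : t < 4 * k + 2) :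
    block k t ∈ Set.Ioo (4 * (k : ℝ)) t ∧ t - 1 ≤ block k t := by
  obtain ⟨⟨hs₁, hs₂⟩, hs₃⟩ := wFinv_mem_Ioo (4 * k) (t := t) (by push_cast; linarith)
    (by push_cast; linarith)
  obtain ⟨⟨hu₁, hu₂⟩, hu₃⟩ := wFinv_mem_Ioo (4 * k) (t := wFinv (4 * k) t) hs₁
    (by push_cast at hs₁ hs₂ ⊢; linarith)
  push_cast at hs₁ hs₃ hu₁ hu₃
  have hu : wFinv (4 * k) (wFinv (4 * k) t) ≤ (4 * k + 2 : ℕ) := by push_cast; linarith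
  simp only [block, wF_of_le _ hu]
  exact ⟨⟨hu₁, by linarith⟩, by linarith⟩

lemma block_mem_Ioo_of_gt (h₁ : 4 * (k : ℝ) + 2 < t) (h₂ : t < 4 * k + 4) :
    block k t ∈ Set.Ioo t (4 * (k : ℝ) + 4) ∧ block k t ≤ t + 1 := by
  obtain ⟨⟨hs₁, hs₂⟩, hs₃⟩ := wF_mem_Ioo (4 * k + 2) (t := t) (by push_cast; linarith)
    (by push_cast; linarith)
  obtain ⟨⟨hu₁, hu₂⟩, hu₃⟩ := wF_mem_Ioo (4 * k + 2) (t := wF (4 * k + 2) t)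
    (by push_cast at hs₁ ⊢; linarith) hs₂
  push_cast at hs₂ hs₃ hu₂ hu₃
  have ht : ((4 * k : ℕ) : ℝ) + 2 ≤ t := by push_cast; linarith
  simp only [block, wFinv_of_ge _ ht]
  exact ⟨⟨by linarith, by linarith⟩, by linarith⟩

lemma block_mem_Icc_and_abs_sub_le (h₁ : 4 * (k : ℝ) ≤ t) (h₂ : t ≤ 4 * k + 4) :
    block k t ∈ Set.Icc (4 * (k : ℝ)) (4 * k + 4) ∧ |block k t - t| ≤ 1 := by
  rcases h₁.eq_or_lt with rfl | h₁
  · rw [block_of_le k le_rfl]; simp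
  rcases h₂.eq_or_lt with rfl | h₂
  · rw [block_of_ge k le_rfl]; simp
  rcases lt_trichotomy t (4 * k + 2) with hlt | rfl | hgt
  · obtain ⟨⟨hb₁, hb₂⟩, hb₃⟩ := block_mem_Ioo_of_lt k h₁ hlt
    exact ⟨⟨hb₁.le, by linarith⟩, abs_le.2 ⟨by linarith, by linarith⟩⟩
  · rw [block_four_mul_add_two]
    exact ⟨⟨by linarith, by linarith⟩, by simp⟩
  · obtain ⟨⟨hb₁, hb₂⟩, hb₃⟩ := block_mem_Ioo_of_gt k hgt h₂
    exact ⟨⟨by linarith, hb₂.le⟩, abs_le.2 ⟨by linarith, by linarith⟩⟩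

end Block

section Product

variable {t : ℝ}

lemma gBlocks_succ (m : ℕ) : gBlocks (m + 1) t = block m (gBlocks m t) := rfl

lemma gBlocks_of_nonpos (m : ℕ) (h : t ≤ 0) : gBlocks m t = t := by
  induction m with
  | zero => rfl
  | succ n ih => rw [gBlocks_succ, ih, block_of_le n (by linarith [n.cast_nonneg (α := ℝ)])]

lemma gBlocks_of_ge (m : ℕ) (h : 4 * (m : ℝ) ≤ t) : gBlocks m t = t := by
  induction m with
  | zero => rfl
  | succ n ih =>
    push_cast at h
    rw [gBlocks_succ, ih (by linarith), block_of_ge n (by linarith)]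

lemma gBlocks_eq_block {m k : ℕ} (hk : k < m) (h₁ : 4 * (k : ℝ) ≤ t) (h₂ : t ≤ 4 * k + 4) :
    gBlocks m t = block k t := by
  induction m with
  | zero => omega
  | succ n ih =>
    rw [gBlocks_succ]
    rcases (Nat.lt_succ_iff_lt_or_eq.mp hk) with hkn | rfl
    · have hkn' : (k : ℝ) + 1 ≤ n := by exact_mod_cast hkn
      rw [ih hkn, block_of_le n (by linarith [(block_mem_Icc_and_abs_sub_le k h₁ h₂).1.2])]
    · rw [gBlocks_of_ge k h₁]

lemma exists_lt_four_mul_le_lt {m : ℕ} (h₁ : 0 ≤ t) (h₂ : t < 4 * m) :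
    ∃ k < m, 4 * (k : ℝ) ≤ t ∧ t < 4 * k + 4 := by
  refine ⟨⌊t / 4⌋₊, ?_, ?_, ?_⟩
  · exact (Nat.floor_lt (by positivity)).2 (by linarith)
  · linarith [Nat.floor_le (a := t / 4) (by positivity)]
  · linarith [Nat.lt_floor_add_one (t / 4)]

end Product

theorem gBlocks_properties_general (m : ℕ) :
    (∀ t : ℝ, gBlocks m t ≠ t → t ∈ Set.Icc (0 : ℝ) (4 * m)) ∧
    (∀ k : ℕ, k ≤ m → gBlocks m (4 * (k : ℝ)) = 4 * (k : ℝ)) ∧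
    (∀ k : ℕ, k < m → gBlocks m (4 * (k : ℝ) + 2) = 4 * (k : ℝ) + 2) ∧
    (∀ t : ℝ, |gBlocks m t - t| ≤ 1) ∧
    (∀ k : ℕ, k < m →
      (∀ t ∈ Set.Ioo (4 * (k : ℝ) + 2) (4 * (k : ℝ) + 4), t < gBlocks m t) ∧
      (∀ t ∈ Set.Ioo (4 * (k : ℝ)) (4 * (k : ℝ) + 2), gBlocks m t < t)) := by
  refine ⟨fun t ht => ?_, fun k hk => ?_, fun k hk => ?_, fun t => ?_, fun k hk => ⟨?_, ?_⟩⟩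
  · by_contra hout
    rcases not_and_or.1 hout with h | h
    · exact ht (gBlocks_of_nonpos m (not_le.1 h).le)
    · exact ht (gBlocks_of_ge m (not_le.1 h).le)
  · rcases hk.eq_or_lt with rfl | hk
    · exact gBlocks_of_ge k le_rfl
    · rw [gBlocks_eq_block hk le_rfl (by linarith), block_of_le k le_rfl]
  · rw [gBlocks_eq_block hk (by linarith) (by linarith), block_four_mul_add_two]
  · rcases le_or_gt t 0 with h₀ | h₀
    · simp [gBlocks_of_nonpos m h₀]
    rcases le_or_gt (4 * (m : ℝ)) t with hm | hm
    · simp [gBlocks_of_ge m hm]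
    obtain ⟨k, hk, h₁, h₂⟩ := exists_lt_four_mul_le_lt h₀.le hm
    rw [gBlocks_eq_block hk h₁ h₂.le]
    exact (block_mem_Icc_and_abs_sub_le k h₁ h₂.le).2
  · rintro t ⟨h₁, h₂⟩
    rw [gBlocks_eq_block hk (by linarith) h₂.le]
    exact (block_mem_Ioo_of_gt k h₁ h₂).1.1
  · rintro t ⟨h₁, h₂⟩
    rw [gBlocks_eq_block hk h₁.le (by linarith)]
    exact (block_mem_Ioo_of_lt k h₁ h₂).1.2

/-- For `m ≥ 1`, the element `g = (w_0⁻² w_2²) ⋯ (w_{4(m-1)}⁻² w_{4(m-1)+2}²)` has support in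
`[0, 4m]`, fixes every multiple of `4` and every odd multiple of `2` in `[0, 4m]`, moves no
point by more than `1`, and satisfies `t·g > t` on each `(4k+2, 4k+4)` and `t·g < t` on each
`(4k, 4k+2)` for `0 ≤ k < m`. -/
theorem gBlocks_properties (m : ℕ) (hm : 1 ≤ m) :
    (∀ t : ℝ, gBlocks m t ≠ t → t ∈ Set.Icc (0 : ℝ) (4 * m)) ∧
    (∀ k : ℕ, k ≤ m → gBlocks m (4 * (k : ℝ)) = 4 * (k : ℝ)) ∧
    (∀ k : ℕ, k < m → gBlocks m (4 * (k : ℝ) + 2) = 4 * (k : ℝ) + 2) ∧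
    (∀ t : ℝ, |gBlocks m t - t| ≤ 1) ∧
    (∀ k : ℕ, k < m →
      (∀ t ∈ Set.Ioo (4 * (k : ℝ) + 2) (4 * (k : ℝ) + 4), t < gBlocks m t) ∧
      (∀ t ∈ Set.Ioo (4 * (k : ℝ)) (4 * (k : ℝ) + 2), gBlocks m t < t)) :=
  gBlocks_properties_general m
end

section
/- In the ℝ≥0 model of Thompson's group F, the element C = X_0² X_1² X_0^{-2} X_1^{-2} (where X_0 agrees with x_0 on [0, b−2], with the modified g_0 on [b−2, b+4m+3], and with x_0 on [b+4m+3, ∞), and X_1 is the conjugate of X_0 by translation by 1) has support in (b−5,∞) equal to the open interval (b − 9/2, b + 4m + 7/2), and every point η with b − 7/2 ≤ η < b + 4m + 7/2 satisfies η·C^{m+2} > b + 4m + 3 + 3/16. -/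
/-- The shape of the basic block `w_0²` on `[0,2]` (the identity elsewhere):
`0↦0`, `1/4↦1`, `1/2↦3/2`, `1↦7/4`, `2↦2`, affine in between. -/
noncomputable def blockUp (t : ℝ) : ℝ :=
  if t ≤ 0 then t
  else if t ≤ 1 / 4 then 4 * t
  else if t ≤ 1 / 2 then 2 * t + 1 / 2
  else if t ≤ 1 then t / 2 + 5 / 4
  else if t ≤ 2 then t / 4 + 3 / 2
  else t

/-- The shape of `w_0⁻²` on `[0,2]` (the identity elsewhere), inverse of `blockUp`. -/
noncomputable def blockDown (t : ℝ) : ℝ :=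
  if t ≤ 0 then t
  else if t ≤ 1 then t / 4
  else if t ≤ 3 / 2 then t / 2 - 1 / 4
  else if t ≤ 7 / 4 then 2 * t - 5 / 2
  else if t ≤ 2 then 4 * t - 6
  else t

/-- The unmodified block pattern `(w_0⁻² w_2²)(w_4⁻² w_6²)⋯`, in relative coordinates. -/
noncomputable def gmidRel (u : ℝ) : ℝ :=
  if u - 4 * (⌊u / 4⌋ : ℝ) ≤ 2 then 4 * (⌊u / 4⌋ : ℝ) + blockDown (u - 4 * (⌊u / 4⌋ : ℝ))
  else 4 * (⌊u / 4⌋ : ℝ) + 2 + blockUp (u - 4 * (⌊u / 4⌋ : ℝ) - 2)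

/-- The modified generator `X_0` of the paper, with parameters `m` and `b = 4l`:
it agrees with `x_0` on `[0, b−2]` and on `[b+4m+3, ∞)`, with the block function `g_0`
(a product of translated blocks `w_{b+4k}⁻² w_{b+4k+2}²`) on `[b, b+4m+2]`, and is modified
near the two ends (`[b−2, b]` and `[b+4m+2, b+4m+3]`) so as to interpolate with
translation by `1`. -/
noncomputable def X0fun (m l : ℕ) (t : ℝ) : ℝ :=
  if t ≤ 4 * (l : ℝ) - 3 / 2 then xF 0 t
  else if t ≤ 4 * (l : ℝ) - 1 then 4 * (l : ℝ) - 1 / 2 + (t - (4 * (l : ℝ) - 3 / 2)) / 2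
  else if t ≤ 4 * (l : ℝ) then 4 * (l : ℝ) - 1 / 4 + (t - (4 * (l : ℝ) - 1)) / 4
  else if t ≤ 4 * (l : ℝ) + 4 * m then 4 * (l : ℝ) + gmidRel (t - 4 * (l : ℝ))
  else if t ≤ 4 * (l : ℝ) + 4 * m + 2 then
    4 * (l : ℝ) + 4 * m + blockDown (t - (4 * (l : ℝ) + 4 * m))
  else if t ≤ 4 * (l : ℝ) + 4 * m + 9 / 4 then
    4 * (l : ℝ) + 4 * m + 2 + 4 * (t - (4 * (l : ℝ) + 4 * m + 2))
  else if t ≤ 4 * (l : ℝ) + 4 * m + 5 / 2 then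
    4 * (l : ℝ) + 4 * m + 3 + 2 * (t - (4 * (l : ℝ) + 4 * m + 9 / 4))
  else t + 1

/-- The modified generator `X_1`: the conjugate of `X_0` by translation by `1`. -/
noncomputable def X1fun (m l : ℕ) (t : ℝ) : ℝ := X0fun m l (t - 1) + 1

/-- `C = X_0² X_1² X_0⁻² X_1⁻²` as a self-map of `ℝ≥0` (right action), given inverse
functions for `X_0` and `X_1`. -/
noncomputable def Cfun (m l : ℕ) (X0i X1i : ℝ → ℝ) (t : ℝ) : ℝ :=
  X1i (X1i (X0i (X0i (X1fun m l (X1fun m l (X0fun m l (X0fun m l t)))))))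


/-!
Write `Φ t = t·X₁²X₀²` and `Ψ t = t·X₀²X₁²`, so that `Φ (t·C) = Ψ t`. As `X₀` and `X₁` are
increasing homeomorphisms, `t·C = t` iff `Φ t = Ψ t`, and `s ≤ t·C` iff `Φ s ≤ Ψ t`.
With `b = 4l`: below `b − 9/2` and above `b + 4m + 7/2` both `Φ` and `Ψ` are translation
by `4`. In between, `Φ t < Ψ t` follows by monotonicity from `Φ b' ≤ Ψ a'` at finitely many
pairs of breakpoints `a' < b'`; inside the blocks `X₀` is a translate of one fixed map, so these
evaluations are the same in every block. Likewise `C` moves `b + 4j + 187/64` past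
`b + 4(j+1) + 187/64` for `j < m`, which gives the escape estimate after `m + 2` steps.
-/
open Set

section Order

variable {α β : Type*}

lemma apply_lt_apply_of_bracket [Preorder α] [Preorder β] {f g : α → β} (hf : Monotone f)
    (hg : StrictMono g) {a b t : α} (hat : a < t) (htb : t ≤ b) (hba : f b ≤ g a) : f t < g t :=
  (hf htb).trans_lt (hba.trans_lt (hg hat))

lemma apply_lt_apply_of_chain [LinearOrder α] [Preorder β] {f g : α → β} (hf : Monotone f)
    (hg : StrictMono g) {x : ℕ → α} {n : ℕ} (h : ∀ k < n, f (x (k + 1)) ≤ g (x k)) {t : α}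
    (ht : t ∈ Ioc (x 0) (x n)) : f t < g t := by
  induction n with
  | zero => exact absurd ht.2 ht.1.not_ge
  | succ n ih =>
    rcases le_or_gt t (x n) with htn | htn
    · exact ih (fun k hk => h k (by omega)) ⟨ht.1, htn⟩
    · exact apply_lt_apply_of_bracket hf hg htn ht.2 (h n n.lt_succ_self)

lemma le_iterate_of_chain [Preorder α] {C : α → α} (hC : Monotone C) {x : ℕ → α} {n : ℕ}
    (h : ∀ k < n, x (k + 1) ≤ C (x k)) {y : α} (hy : x 0 ≤ y) : x n ≤ C^[n] y := by
  induction n with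
  | zero => exact hy
  | succ n ih =>
    rw [Function.iterate_succ_apply']
    exact (h n n.lt_succ_self).trans (hC (ih fun k hk => h k (by omega)))

variable [LinearOrder α] [Preorder β] {f g : α → β} {C : α → α}

lemma le_apply_iff_of_comp_eq (hf : StrictMono f) (hC : ∀ t, f (C t) = g t) {s t : α} :
    s ≤ C t ↔ f s ≤ g t := by
  rw [← hC t, hf.le_iff_le]

lemma apply_eq_self_iff_of_comp_eq (hf : StrictMono f) (hC : ∀ t, f (C t) = g t) {t : α} :
    C t = t ↔ g t = f t := by
  rw [← hC t, hf.injective.eq_iff]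

lemma monotone_of_comp_eq (hf : StrictMono f) (hg : Monotone g) (hC : ∀ t, f (C t) = g t) :
    Monotone C := fun a b hab => by
  rw [← hf.le_iff_le, hC, hC]
  exact hg hab

end Order

lemma StrictMonoOn.Ici_of_Icc_of_Ici {f : ℝ → ℝ} {a b : ℝ} (hab : a ≤ b)
    (h₁ : StrictMonoOn f (Icc a b)) (h₂ : StrictMonoOn f (Ici b)) : StrictMonoOn f (Ici a) := by
  rw [← Icc_union_Ici_eq_Ici hab]
  exact h₁.union h₂ (isGreatest_Icc hab) isLeast_Ici

lemma xF_zero_strictMono : StrictMono (xF 0) := fun u v h => by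
  unfold xF; push_cast; split_ifs <;> linarith

lemma xF_zero_of_one_le {t : ℝ} (ht : 1 ≤ t) : xF 0 t = t + 1 := by
  unfold xF; push_cast; split_ifs <;> linarith

lemma blockDown_strictMono : StrictMono blockDown := fun u v h => by
  unfold blockDown; split_ifs <;> linarith

lemma blockUp_strictMono : StrictMono blockUp := fun u v h => by
  unfold blockUp; split_ifs <;> linarith

lemma blockDown_mem_Icc {t : ℝ} (ht : t ∈ Icc 0 2) : blockDown t ∈ Icc 0 2 := by
  obtain ⟨h0, h2⟩ := ht
  unfold blockDown; split_ifs <;> constructor <;> linarith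

lemma blockUp_mem_Ico {t : ℝ} (ht : t ∈ Ico 0 2) : blockUp t ∈ Ico 0 2 := by
  obtain ⟨h0, h2⟩ := ht
  unfold blockUp; split_ifs <;> constructor <;> linarith

lemma gmidRel_four_mul_add_of_le_two (k : ℕ) {r : ℝ} (h0 : 0 ≤ r) (h2 : r ≤ 2) :
    gmidRel (4 * k + r) = 4 * k + blockDown r := by
  have hk : ⌊(4 * k + r) / 4⌋ = k := by
    rw [Int.floor_eq_iff]; push_cast; constructor <;> linarith
  simp [gmidRel, hk, h2]

lemma gmidRel_four_mul_add_of_two_lt (k : ℕ) {r : ℝ} (h2 : 2 < r) (h4 : r < 4) :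
    gmidRel (4 * k + r) = 4 * k + 2 + blockUp (r - 2) := by
  have hk : ⌊(4 * k + r) / 4⌋ = k := by
    rw [Int.floor_eq_iff]; push_cast; constructor <;> linarith
  simp [gmidRel, hk, h2.not_ge]

lemma gmidRel_zero : gmidRel 0 = 0 := by
  norm_num [gmidRel, blockDown]

lemma gmidRel_mem_Ico (u : ℝ) : gmidRel u ∈ Ico (4 * ⌊u / 4⌋ : ℝ) (4 * ⌊u / 4⌋ + 4) := by
  have h0 := Int.floor_le (u / 4)
  have h4 := Int.lt_floor_add_one (u / 4)
  unfold gmidRel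
  split_ifs with h
  · have := blockDown_mem_Icc (t := u - 4 * ⌊u / 4⌋) ⟨by linarith, h⟩
    constructor <;> linarith [this.1, this.2]
  · have := blockUp_mem_Ico (t := u - 4 * ⌊u / 4⌋ - 2) ⟨by linarith, by linarith⟩
    constructor <;> linarith [this.1, this.2]

lemma gmidRel_strictMono : StrictMono gmidRel := by
  intro u v huv
  rcases (Int.floor_mono (div_le_div_of_nonneg_right huv.le zero_le_four)).lt_or_eq with hlt | heq
  · have : (⌊u / 4⌋ : ℝ) + 1 ≤ ⌊v / 4⌋ := by exact_mod_cast hlt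
    linarith [(gmidRel_mem_Ico u).2, (gmidRel_mem_Ico v).1]
  · have h0 := Int.floor_le (u / 4)
    have h4 := Int.lt_floor_add_one (v / 4)
    rw [← heq] at h4
    have hd := blockDown_strictMono (sub_lt_sub_right huv (4 * ⌊u / 4⌋ : ℝ))
    have hu := blockUp_strictMono (sub_lt_sub_right (sub_lt_sub_right huv (4 * ⌊u / 4⌋ : ℝ)) 2)
    unfold gmidRel
    rw [← heq]
    split_ifs with h₁ h₂
    · linarith
    · have : 0 < blockUp (v - 4 * ⌊u / 4⌋ - 2) := by unfold blockUp; split_ifs <;> linarith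
      linarith [(blockDown_mem_Icc ⟨by linarith, h₁⟩).2]
    · linarith
    · linarith

section Pieces

variable {m l : ℕ} {t : ℝ}

lemma X0fun_eq_xF (ht : t ≤ 4 * l - 3 / 2) : X0fun m l t = xF 0 t := by
  simp [X0fun, ht]

lemma X0fun_eq_add_one_of_low (h₁ : 1 ≤ t) (h₂ : t ≤ 4 * l - 3 / 2) : X0fun m l t = t + 1 := by
  rw [X0fun_eq_xF h₂, xF_zero_of_one_le h₁]

lemma X0fun_eq_of_lower_ramp₁ (hl : 1 ≤ l) (h₁ : 4 * l - 3 / 2 ≤ t) (h₂ : t ≤ 4 * l - 1) :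
    X0fun m l t = 4 * l - 1 / 2 + (t - (4 * l - 3 / 2)) / 2 := by
  have : (1 : ℝ) ≤ l := by exact_mod_cast hl
  unfold X0fun xF; push_cast; split_ifs <;> linarith

lemma X0fun_eq_of_lower_ramp₂ (h₁ : 4 * l - 1 ≤ t) (h₂ : t ≤ 4 * l) :
    X0fun m l t = 4 * l - 1 / 4 + (t - (4 * l - 1)) / 4 := by
  unfold X0fun; split_ifs <;> linarith

lemma X0fun_eq_gmidRel (h₁ : 4 * l ≤ t) (h₂ : t ≤ 4 * l + 4 * m + 2) :
    X0fun m l t = 4 * l + gmidRel (t - 4 * l) := by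
  have hm : (0 : ℝ) ≤ m := m.cast_nonneg
  unfold X0fun
  split_ifs
  · linarith
  · linarith
  · obtain rfl : t = 4 * l := by linarith
    rw [sub_self, gmidRel_zero]
    ring
  · rfl
  · rw [show t - 4 * l = 4 * (m : ℝ) + (t - (4 * l + 4 * m)) by ring,
      gmidRel_four_mul_add_of_le_two m (by linarith) (by linarith)]
    ring

lemma X0fun_eq_of_upper_ramp₁ (h₁ : 4 * l + 4 * m + 2 ≤ t) (h₂ : t ≤ 4 * l + 4 * m + 9 / 4) :
    X0fun m l t = 4 * l + 4 * m + 2 + 4 * (t - (4 * l + 4 * m + 2)) := by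
  have hm : (0 : ℝ) ≤ m := m.cast_nonneg
  unfold X0fun
  split_ifs <;> first
    | linarith
    | obtain rfl : t = 4 * l + 4 * m + 2 := by linarith
      norm_num [blockDown]

lemma X0fun_eq_of_upper_ramp₂ (h₁ : 4 * l + 4 * m + 9 / 4 ≤ t) (h₂ : t ≤ 4 * l + 4 * m + 5 / 2) :
    X0fun m l t = 4 * l + 4 * m + 3 + 2 * (t - (4 * l + 4 * m + 9 / 4)) := by
  have hm : (0 : ℝ) ≤ m := m.cast_nonneg
  unfold X0fun; split_ifs <;> linarith

lemma X0fun_eq_add_one_of_high (h : 4 * l + 4 * m + 5 / 2 ≤ t) : X0fun m l t = t + 1 := by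
  have hm : (0 : ℝ) ≤ m := m.cast_nonneg
  unfold X0fun; split_ifs <;> linarith

lemma X0fun_cell_down {k : ℕ} (hk : k ≤ m) {r : ℝ} (hr : r ∈ Icc 0 2) :
    X0fun m l (4 * l + 4 * k + r) = 4 * l + 4 * k + blockDown r := by
  have : (k : ℝ) ≤ m := by exact_mod_cast hk
  rw [X0fun_eq_gmidRel (by linarith [hr.1]) (by linarith [hr.2]),
    show 4 * l + 4 * k + r - 4 * l = 4 * (k : ℝ) + r by ring,
    gmidRel_four_mul_add_of_le_two k hr.1 hr.2, add_assoc]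

lemma X0fun_cell_up {k : ℕ} (hk : k < m) {r : ℝ} (hr : r ∈ Ioo 2 4) :
    X0fun m l (4 * l + 4 * k + r) = 4 * l + 4 * k + (2 + blockUp (r - 2)) := by
  have : (k : ℝ) + 1 ≤ m := by exact_mod_cast hk
  rw [X0fun_eq_gmidRel (by linarith [hr.1]) (by linarith [hr.2]),
    show 4 * l + 4 * k + r - 4 * l = 4 * (k : ℝ) + r by ring,
    gmidRel_four_mul_add_of_two_lt k hr.1 hr.2]
  ring

end Pieces

theorem X0fun_strictMono {m l : ℕ} (hl : 1 ≤ l) : StrictMono (X0fun m l) := by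
  have hm : (0 : ℝ) ≤ m := m.cast_nonneg
  have hl' : (1 : ℝ) ≤ l := by exact_mod_cast hl
  have high : StrictMonoOn (X0fun m l) (Ici (4 * l + 4 * m + 5 / 2)) := fun x hx y hy hxy => by
    rw [X0fun_eq_add_one_of_high hx, X0fun_eq_add_one_of_high hy]; linarith
  have upper₂ : StrictMonoOn (X0fun m l) (Ici (4 * l + 4 * m + 9 / 4)) :=
    .Ici_of_Icc_of_Ici (by linarith) (fun x hx y hy hxy => by
      rw [X0fun_eq_of_upper_ramp₂ hx.1 hx.2, X0fun_eq_of_upper_ramp₂ hy.1 hy.2]; linarith) high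
  have upper₁ : StrictMonoOn (X0fun m l) (Ici (4 * l + 4 * m + 2)) :=
    .Ici_of_Icc_of_Ici (by linarith) (fun x hx y hy hxy => by
      rw [X0fun_eq_of_upper_ramp₁ hx.1 hx.2, X0fun_eq_of_upper_ramp₁ hy.1 hy.2]; linarith) upper₂
  have blocks : StrictMonoOn (X0fun m l) (Ici (4 * l)) :=
    .Ici_of_Icc_of_Ici (by linarith) (fun x hx y hy hxy => by
      rw [X0fun_eq_gmidRel hx.1 hx.2, X0fun_eq_gmidRel hy.1 hy.2]
      linarith [gmidRel_strictMono (sub_lt_sub_right hxy (4 * l : ℝ))]) upper₁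
  have lower₂ : StrictMonoOn (X0fun m l) (Ici (4 * l - 1)) :=
    .Ici_of_Icc_of_Ici (by linarith) (fun x hx y hy hxy => by
      rw [X0fun_eq_of_lower_ramp₂ hx.1 hx.2, X0fun_eq_of_lower_ramp₂ hy.1 hy.2]; linarith) blocks
  have lower₁ : StrictMonoOn (X0fun m l) (Ici (4 * l - 3 / 2)) :=
    .Ici_of_Icc_of_Ici (by linarith) (fun x hx y hy hxy => by
      rw [X0fun_eq_of_lower_ramp₁ hl hx.1 hx.2, X0fun_eq_of_lower_ramp₁ hl hy.1 hy.2]; linarith)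
      lower₂
  refine StrictMonoOn.Iic_union_Ici (fun x hx y hy hxy => ?_) lower₁
  rw [X0fun_eq_xF hx, X0fun_eq_xF hy]
  exact xF_zero_strictMono hxy

theorem X1fun_strictMono {m l : ℕ} (hl : 1 ≤ l) : StrictMono (X1fun m l) := fun _ _ h => by
  unfold X1fun; linarith [X0fun_strictMono (m := m) hl (sub_lt_sub_right h 1)]

noncomputable def Φ (m l : ℕ) (t : ℝ) : ℝ := X0fun m l (X0fun m l (X1fun m l (X1fun m l t)))

noncomputable def Ψ (m l : ℕ) (t : ℝ) : ℝ := X1fun m l (X1fun m l (X0fun m l (X0fun m l t)))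

section Evaluation

variable {m l : ℕ} {t : ℝ}

lemma Φ_strictMono (hl : 1 ≤ l) : StrictMono (Φ m l) :=
  (X0fun_strictMono hl).comp <| (X0fun_strictMono hl).comp <|
    (X1fun_strictMono hl).comp (X1fun_strictMono hl)

lemma Ψ_strictMono (hl : 1 ≤ l) : StrictMono (Ψ m l) :=
  (X1fun_strictMono hl).comp <| (X1fun_strictMono hl).comp <|
    (X0fun_strictMono hl).comp (X0fun_strictMono hl)

lemma Φ_Cfun {X0i X1i : ℝ → ℝ} (h0 : Function.RightInverse X0i (X0fun m l))
    (h1 : Function.RightInverse X1i (X1fun m l)) (t : ℝ) :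
    Φ m l (Cfun m l X0i X1i t) = Ψ m l t := by
  rw [Φ, Cfun, h1, h1, h0, h0, Ψ]

lemma Φ_eq_add_four_below (h₁ : 2 ≤ t) (h₂ : t ≤ 4 * l - 9 / 2) : Φ m l t = t + 4 := by
  simp (disch := grind) only [Φ, X1fun, X0fun_eq_add_one_of_low]
  ring

lemma Ψ_eq_add_four_below (h₁ : 1 ≤ t) (h₂ : t ≤ 4 * l - 7 / 2) : Ψ m l t = t + 4 := by
  simp (disch := grind) only [Ψ, X1fun, X0fun_eq_add_one_of_low]
  ring

lemma Φ_eq_add_four_above (h : 4 * l + 4 * m + 7 / 2 ≤ t) : Φ m l t = t + 4 := by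
  simp (disch := grind) only [Φ, X1fun, X0fun_eq_add_one_of_high]
  ring

lemma Ψ_eq_add_four_above (h : 4 * l + 4 * m + 5 / 2 ≤ t) : Ψ m l t = t + 4 := by
  simp (disch := grind) only [Ψ, X1fun, X0fun_eq_add_one_of_high]
  ring

lemma Φ_of_lower_edge (hl : 2 ≤ l) (h₁ : 4 * l - 9 / 2 ≤ t) (h₂ : t ≤ 4 * l - 4) :
    Φ m l t = t + 4 - (t - (4 * l - 9 / 2)) / 2 := by
  have : (2 : ℝ) ≤ l := by exact_mod_cast hl
  simp (disch := grind) only [Φ, X1fun, X0fun_eq_add_one_of_low, X0fun_eq_of_lower_ramp₁]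
  ring

lemma Φ_of_upper_edge (h₁ : 4 * l + 4 * m + 13 / 4 ≤ t) (h₂ : t ≤ 4 * l + 4 * m + 7 / 2) :
    Φ m l t = t + 4 - (4 * l + 4 * m + 7 / 2 - t) := by
  simp (disch := grind) only [Φ, X1fun, X0fun_eq_add_one_of_high, X0fun_eq_of_upper_ramp₂]
  ring

lemma Φ_four_mul_sub_two (hl : 1 ≤ l) : Φ m l (4 * l - 2) = 4 * l := by
  have : (1 : ℝ) ≤ l := by exact_mod_cast hl
  simp (disch := grind) only [Φ, X1fun, X0fun_eq_add_one_of_low, X0fun_eq_of_lower_ramp₂]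
  ring

lemma Ψ_four_mul_sub_two (hl : 1 ≤ l) : Ψ m l (4 * l - 2) = 4 * l + 29 / 32 := by
  have : (1 : ℝ) ≤ l := by exact_mod_cast hl
  simp (disch := grind) only [Ψ, X1fun, X0fun_eq_add_one_of_low, X0fun_eq_of_lower_ramp₁,
    X0fun_eq_of_lower_ramp₂]
  ring

lemma Ψ_top_133_64 : Ψ m l (4 * l + 4 * m + 133 / 64) = 4 * l + 4 * m + 9 / 2 := by
  simp (disch := grind) only [Ψ, X1fun, X0fun_eq_of_upper_ramp₁, X0fun_eq_of_upper_ramp₂]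
  ring

lemma Ψ_top_9_4 : Ψ m l (4 * l + 4 * m + 9 / 4) = 4 * l + 4 * m + 6 := by
  simp (disch := grind) only [Ψ, X1fun, X0fun_eq_of_upper_ramp₁, X0fun_eq_add_one_of_high]
  ring

lemma Φ_top_3 : Φ m l (4 * l + 4 * m + 3) = 4 * l + 4 * m + 5 := by
  simp (disch := grind) only [Φ, X1fun, X0fun_eq_of_upper_ramp₁, X0fun_eq_add_one_of_high]
  ring

lemma Φ_top_827_256 : Φ m l (4 * l + 4 * m + 827 / 256) = 4 * l + 4 * m + 443 / 64 := by
  simp (disch := grind) only [Φ, X1fun, X0fun_eq_of_upper_ramp₁, X0fun_eq_add_one_of_high]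
  ring

lemma Φ_add_of_local {a c : ℝ} {F : ℝ → ℝ} {I : Set ℝ}
    (hF : ∀ r ∈ I, X0fun m l (a + r) = a + F r) (h₀ : c - 1 ∈ I) (h₁ : F (c - 1) ∈ I)
    (h₂ : F (F (c - 1)) + 1 ∈ I) (h₃ : F (F (F (c - 1)) + 1) ∈ I) :
    Φ m l (a + c) = a + F (F (F (F (c - 1)) + 1)) := by
  have hF₁ : ∀ r ∈ I, X1fun m l (a + (r + 1)) = a + (F r + 1) := fun r hr => by
    rw [X1fun, show a + (r + 1) - 1 = a + r by ring, hF r hr, add_assoc]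
  rw [Φ, show a + c = a + (c - 1 + 1) by ring, hF₁ _ h₀, hF₁ _ h₁, hF _ h₂, hF _ h₃]

lemma Ψ_add_of_local {a c : ℝ} {F : ℝ → ℝ} {I : Set ℝ}
    (hF : ∀ r ∈ I, X0fun m l (a + r) = a + F r) (h₀ : c ∈ I) (h₁ : F c ∈ I)
    (h₂ : F (F c) - 1 ∈ I) (h₃ : F (F (F c) - 1) ∈ I) :
    Ψ m l (a + c) = a + (F (F (F (F c) - 1)) + 1) := by
  have hF₁ : ∀ r ∈ I, X1fun m l (a + (r + 1)) = a + (F r + 1) := fun r hr => by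
    rw [X1fun, show a + (r + 1) - 1 = a + r by ring, hF r hr, add_assoc]
  rw [Ψ, hF _ h₀, hF _ h₁, show a + F (F c) = a + (F (F c) - 1 + 1) by ring, hF₁ _ h₂, hF₁ _ h₃]

lemma Φ_cell_133_64 {j : ℕ} (hj : j ≤ m) :
    Φ m l (4 * l + 4 * j + 133 / 64) = 4 * l + 4 * j + 293 / 4096 := by
  rw [Φ_add_of_local (fun _ => X0fun_cell_down hj)] <;> norm_num [blockDown]

lemma Φ_cell_9_4 {j : ℕ} (hj : j ≤ m) :
    Φ m l (4 * l + 4 * j + 9 / 4) = 4 * l + 4 * j + 19 / 256 := by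
  rw [Φ_add_of_local (fun _ => X0fun_cell_down hj)] <;> norm_num [blockDown]

lemma Φ_cell_187_64 {j : ℕ} (hj : j ≤ m) :
    Φ m l (4 * l + 4 * j + 187 / 64) = 4 * l + 4 * j + 1 / 2 := by
  rw [Φ_add_of_local (fun _ => X0fun_cell_down hj)] <;> norm_num [blockDown]

lemma Ψ_cell_133_64 {k : ℕ} (hk : k < m) :
    Ψ m l (4 * l + 4 * k + 133 / 64) = 4 * l + 4 * k + 9 / 2 := by
  rw [Ψ_add_of_local (fun _ => X0fun_cell_up hk)] <;> norm_num [blockUp]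

lemma Ψ_cell_187_64 {k : ℕ} (hk : k < m) :
    Ψ m l (4 * l + 4 * k + 187 / 64) = 4 * l + 4 * k + 20187 / 4096 := by
  rw [Ψ_add_of_local (fun _ => X0fun_cell_up hk)] <;> norm_num [blockUp]

end Evaluation

section Commutator

variable {m l : ℕ} {C : ℝ → ℝ}

lemma Φ_lt_Ψ (hl : 2 ≤ l) {t : ℝ} (ht : t ∈ Ioo (4 * l - 9 / 2 : ℝ) (4 * l + 4 * m + 7 / 2)) :
    Φ m l t < Ψ m l t := by
  have hΦ := (Φ_strictMono (m := m) (by omega : 1 ≤ l)).monotone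
  have hΨ := Ψ_strictMono (m := m) (by omega : 1 ≤ l)
  have hl' : (2 : ℝ) ≤ l := by exact_mod_cast hl
  have hm : (0 : ℝ) ≤ m := m.cast_nonneg
  obtain ⟨h₀, h₁⟩ := ht
  -- each rung `(a, b]` of the ladder below is closed by `Φ b ≤ Ψ a`
  rcases le_or_gt t (4 * l - 4) with h | h₂
  · rw [Φ_of_lower_edge hl h₀.le h, Ψ_eq_add_four_below (by linarith) (by linarith)]
    linarith
  rcases le_or_gt t (4 * l - 2) with h | h₃
  · refine apply_lt_apply_of_bracket hΦ hΨ h₂ h ?_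
    rw [Φ_four_mul_sub_two (by omega), Ψ_eq_add_four_below (by linarith) (by linarith)]
    linarith
  rcases le_or_gt t (4 * l + 133 / 64) with h | h₄
  · refine apply_lt_apply_of_bracket hΦ hΨ h₃ h ?_
    have := Φ_cell_133_64 (m := m) (l := l) (Nat.zero_le m)
    rw [Nat.cast_zero, mul_zero, add_zero] at this
    rw [this, Ψ_four_mul_sub_two (by omega)]
    linarith
  rcases le_or_gt t (4 * l + 4 * m + 133 / 64) with h | h₅
  · refine apply_lt_apply_of_chain hΦ hΨ (x := fun k : ℕ => 4 * l + 4 * k + 133 / 64) (n := m)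
      (fun k hk => ?_) ⟨by simpa using h₄, h⟩
    rw [Φ_cell_133_64 (Nat.succ_le_of_lt hk), Ψ_cell_133_64 hk]
    push_cast
    linarith
  rcases le_or_gt t (4 * l + 4 * m + 9 / 4) with h | h₆
  · refine apply_lt_apply_of_bracket hΦ hΨ h₅ h ?_
    rw [Φ_cell_9_4 le_rfl, Ψ_top_133_64]
    linarith
  rcases le_or_gt t (4 * l + 4 * m + 3) with h | h₇
  · refine apply_lt_apply_of_bracket hΦ hΨ h₆ h ?_
    rw [Φ_top_3, Ψ_top_9_4]
    linarith
  rcases le_or_gt t (4 * l + 4 * m + 13 / 4) with h | h₈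
  · refine apply_lt_apply_of_bracket hΦ hΨ h₇ h ?_
    rw [Φ_of_upper_edge le_rfl (by linarith), Ψ_eq_add_four_above (by linarith)]
    linarith
  · rw [Φ_of_upper_edge h₈.le h₁.le, Ψ_eq_add_four_above (by linarith)]
    linarith

theorem support_eq_Ioo_of_comp_eq (hl : 2 ≤ l) (hC : ∀ t, Φ m l (C t) = Ψ m l t) :
    {t : ℝ | 4 * l - 5 < t ∧ C t ≠ t} = Ioo (4 * l - 9 / 2 : ℝ) (4 * l + 4 * m + 7 / 2) := by
  have hl' : (2 : ℝ) ≤ l := by exact_mod_cast hl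
  ext t
  simp only [mem_ofPred_eq, mem_Ioo, Ne, apply_eq_self_iff_of_comp_eq (Φ_strictMono (by omega)) hC]
  constructor
  · rintro ⟨h₀, hne⟩
    refine ⟨lt_of_not_ge fun h => hne ?_, lt_of_not_ge fun h => hne ?_⟩
    · rw [Φ_eq_add_four_below (by linarith) h, Ψ_eq_add_four_below (by linarith) (by linarith)]
    · rw [Φ_eq_add_four_above h, Ψ_eq_add_four_above (by linarith)]
  · rintro ⟨h₀, h₁⟩
    exact ⟨by linarith, (Φ_lt_Ψ hl ⟨h₀, h₁⟩).ne'⟩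

theorem lt_iterate_of_comp_eq (hl : 2 ≤ l) (hC : ∀ t, Φ m l (C t) = Ψ m l t) {η : ℝ}
    (hη : 4 * l - 7 / 2 ≤ η) : 4 * l + 4 * m + 3 + 3 / 16 < C^[m + 2] η := by
  have hl' : (2 : ℝ) ≤ l := by exact_mod_cast hl
  have hΦ := Φ_strictMono (m := m) (by omega : 1 ≤ l)
  have hCm := monotone_of_comp_eq hΦ (Ψ_strictMono (by omega)).monotone hC
  have step : ∀ {s t : ℝ}, Φ m l s ≤ Ψ m l t → s ≤ C t := (le_apply_iff_of_comp_eq hΦ hC).2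
  have first : 4 * l + 4 * ((0 : ℕ) : ℝ) + 187 / 64 ≤ C η := step <| by
    rw [Φ_cell_187_64 (Nat.zero_le m)]
    have := (Ψ_strictMono (m := m) (by omega : 1 ≤ l)).monotone hη
    rw [Ψ_eq_add_four_below (by linarith) le_rfl] at this
    push_cast; linarith
  have middle := le_iterate_of_chain hCm (x := fun k : ℕ => 4 * l + 4 * k + 187 / 64) (n := m)
    (fun k hk => step <| by
      rw [Φ_cell_187_64 (Nat.succ_le_of_lt hk), Ψ_cell_187_64 hk]
      push_cast; linarith) first
  have last : 4 * l + 4 * m + 827 / 256 ≤ C (4 * l + 4 * m + 187 / 64) := step <| by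
    rw [Φ_top_827_256, Ψ_eq_add_four_above (by linarith)]
    linarith
  calc (4 * l + 4 * m + 3 + 3 / 16 : ℝ) < 4 * l + 4 * m + 827 / 256 := by linarith
    _ ≤ C (C^[m] (C η)) := last.trans (hCm middle)
    _ = C^[m + 2] η := by rw [Function.iterate_succ_apply', Function.iterate_succ_apply]

end Commutator

/-- For all sufficiently large multiples `b = 4l` of `4` and all `m ≥ 1`, the support of
`C = X_0² X_1² X_0⁻² X_1⁻²` inside `(b−5, ∞)` is exactly the open interval
`(b − 9/2, b + 4m + 7/2)`, and every `η` with `b − 7/2 ≤ η < b + 4m + 7/2` satisfies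
`η·C^{m+2} > b + 4m + 3 + 3/16`. -/
theorem C_support_and_escape :
    ∃ N : ℕ, ∀ m l : ℕ, 1 ≤ m → N ≤ l → ∀ X0i X1i : ℝ → ℝ,
      Function.LeftInverse X0i (X0fun m l) → Function.RightInverse X0i (X0fun m l) →
      Function.LeftInverse X1i (X1fun m l) → Function.RightInverse X1i (X1fun m l) →
      ({t : ℝ | 4 * (l : ℝ) - 5 < t ∧ Cfun m l X0i X1i t ≠ t} =
        Set.Ioo (4 * (l : ℝ) - 9 / 2) (4 * (l : ℝ) + 4 * m + 7 / 2)) ∧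
      ∀ η : ℝ, 4 * (l : ℝ) - 7 / 2 ≤ η → η < 4 * (l : ℝ) + 4 * m + 7 / 2 →
        4 * (l : ℝ) + 4 * m + 3 + 3 / 16 < (Cfun m l X0i X1i)^[m + 2] η := by
  refine ⟨2, fun m l _ hl X0i X1i _ h0 _ h1 => ?_⟩
  have hC := Φ_Cfun h0 h1
  exact ⟨support_eq_Ioo_of_comp_eq hl hC, fun η hη _ => lt_iterate_of_comp_eq hl hC hη⟩
end

section
/- With X_0, X_1 the modified generators of Thompson's group F constructed with parameters b (sufficiently large) and m ≥ 1, the elements S = X_0 X_2 X_1^{-2} and T = X_0² X_2 X_4 X_3^{-2} X_1^{-1} X_0^{-1} (where X_i = X_0^{1−i} X_1 X_0^{i−1}) have support inside (b−5, ∞) contained in the interval (b − 5/2, b + 4m + 3 + 1/8). -/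
/-- `S = X_0 X_2 X_1⁻²` (right action, with `X_2 = X_0⁻¹ X_1 X_0`), given inverse functions
for `X_0` and `X_1`. -/
noncomputable def Sfun (m l : ℕ) (X0i X1i : ℝ → ℝ) (t : ℝ) : ℝ :=
  X1i (X1i (X0fun m l (X1fun m l (X0i (X0fun m l t)))))

/-- `T = X_0² X_2 X_4 X_3⁻² X_1⁻¹ X_0⁻¹` (right action, with `X_i = X_0^{1−i} X_1 X_0^{i−1}`),
given inverse functions for `X_0` and `X_1`. -/
noncomputable def Tfun (m l : ℕ) (X0i X1i : ℝ → ℝ) (t : ℝ) : ℝ :=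
  let f0 := X0fun m l
  let f1 := X1fun m l
  let u1 := f0 (f0 t)                                   -- X_0²
  let u2 := f0 (f1 (X0i u1))                            -- X_2 = X_0⁻¹ X_1 X_0
  let u3 := f0 (f0 (f0 (f1 (X0i (X0i (X0i u2))))))      -- X_4 = X_0⁻³ X_1 X_0³
  let u4 := f0 (f0 (X1i (X0i (X0i u3))))                -- X_3⁻¹ = X_0⁻² X_1⁻¹ X_0²
  let u5 := f0 (f0 (X1i (X0i (X0i u4))))                -- X_3⁻¹
  X0i (X1i u5)                                          -- X_1⁻¹ X_0⁻¹

/-!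
After free cancellation, `S = X₁ X₀ X₁⁻²` and `T = X₀ X₁ X₀⁻² X₁ X₀ X₁⁻² X₀² X₁⁻¹ X₀⁻¹`
(right action), and their orbits starting at `t` only visit `t`, `t + 1` and `t · X₁`. So `t` is
fixed as soon as `X₀` and `X₁` both act as translation by `1` at those points. This is the case
for `2 < t ≤ b − 5/2`, where the generators are still `x₀` and `x₁`, and for
`t ≥ b + 4m + 3 + 1/8`, since then `t · X₁ ≥ b + 4m + 7/2`, beyond which both are translations.
-/
theorem Sfun_eq_self_of_agree {m l : ℕ} {X0i X1i : ℝ → ℝ} (τ : ℝ → ℝ)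
    (h0 : Function.LeftInverse X0i (X0fun m l)) (h1 : Function.LeftInverse X1i (X1fun m l))
    {t : ℝ} (hw0 : X0fun m l (X1fun m l t) = τ (X1fun m l t))
    (hw1 : X1fun m l (X1fun m l t) = τ (X1fun m l t)) :
    Sfun m l X0i X1i t = t := by
  rw [Sfun, h0, hw0, ← hw1, h1, h1]

theorem Tfun_eq_self_of_agree {m l : ℕ} {X0i X1i : ℝ → ℝ} (τ : ℝ → ℝ)
    (h0 : Function.LeftInverse X0i (X0fun m l)) (h1 : Function.LeftInverse X1i (X1fun m l))
    {t : ℝ} (ht0 : X0fun m l t = τ t) (hτt0 : X0fun m l (τ t) = τ (τ t))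
    (hτt1 : X1fun m l (τ t) = τ (τ t)) (hw0 : X0fun m l (X1fun m l t) = τ (X1fun m l t))
    (hw1 : X1fun m l (X1fun m l t) = τ (X1fun m l t)) :
    Tfun m l X0i X1i t = t := by
  have i0 : X0i (τ t) = t := by rw [← ht0, h0]
  have i0' : X0i (τ (τ t)) = τ t := by rw [← hτt0, h0]
  have i1 : X1i (τ (τ t)) = τ t := by rw [← hτt1, h1]
  simp only [Tfun, h0 _]
  rw [ht0, hτt1, i0', i0, hw0, ← hw1, h1, h1, ht0, hτt0, i1, i0]

theorem X0fun_eq_add_one_of_lt_of_le {m l : ℕ} {u : ℝ} (h1 : 1 < u)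
    (h2 : u ≤ 4 * (l : ℝ) - 3 / 2) : X0fun m l u = u + 1 := by
  unfold X0fun xF
  push_cast
  rw [if_pos h2, if_neg (by linarith), if_neg (by linarith)]

theorem X0fun_eq_add_one_of_le {m l : ℕ} {u : ℝ} (h : 4 * (l : ℝ) + 4 * m + 5 / 2 ≤ u) :
    X0fun m l u = u + 1 := by
  have hm : (0 : ℝ) ≤ m := m.cast_nonneg
  unfold X0fun
  split_ifs <;> linarith

/-- `X₀` sends `b + 4m + 2 + 1/8` to `b + 4m + 5/2`, where its translation part starts: this is
the origin of the `1/8` in the right end of the support. -/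
theorem le_X0fun {m l : ℕ} {u : ℝ} (h : 4 * (l : ℝ) + 4 * m + 17 / 8 ≤ u) :
    4 * (l : ℝ) + 4 * m + 5 / 2 ≤ X0fun m l u := by
  have hm : (0 : ℝ) ≤ m := m.cast_nonneg
  unfold X0fun
  split_ifs <;> linarith

theorem X1fun_eq_add_one_of_lt_of_le {m l : ℕ} {u : ℝ} (h1 : 2 < u)
    (h2 : u ≤ 4 * (l : ℝ) - 1 / 2) : X1fun m l u = u + 1 := by
  rw [X1fun, X0fun_eq_add_one_of_lt_of_le (by linarith) (by linarith)]
  ring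

theorem X1fun_eq_add_one_of_le {m l : ℕ} {u : ℝ} (h : 4 * (l : ℝ) + 4 * m + 7 / 2 ≤ u) :
    X1fun m l u = u + 1 := by
  rw [X1fun, X0fun_eq_add_one_of_le (by linarith)]
  ring

theorem le_X1fun {m l : ℕ} {u : ℝ} (h : 4 * (l : ℝ) + 4 * m + 25 / 8 ≤ u) :
    4 * (l : ℝ) + 4 * m + 7 / 2 ≤ X1fun m l u := by
  have := le_X0fun (m := m) (l := l) (u := u - 1) (by linarith)
  rw [X1fun]
  linarith

def BothTranslateAt (m l : ℕ) (u : ℝ) : Prop :=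
  X0fun m l u = u + 1 ∧ X1fun m l u = u + 1

section Support

variable {m l : ℕ} {X0i X1i : ℝ → ℝ} {t : ℝ}

theorem bothTranslateAt_of_lt_of_le {u : ℝ} (h1 : 2 < u) (h2 : u ≤ 4 * (l : ℝ) - 3 / 2) :
    BothTranslateAt m l u :=
  ⟨X0fun_eq_add_one_of_lt_of_le (by linarith) h2,
    X1fun_eq_add_one_of_lt_of_le h1 (by linarith)⟩

theorem bothTranslateAt_of_le {u : ℝ} (h : 4 * (l : ℝ) + 4 * m + 7 / 2 ≤ u) :
    BothTranslateAt m l u :=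
  ⟨X0fun_eq_add_one_of_le (by linarith), X1fun_eq_add_one_of_le h⟩

theorem Sfun_eq_self_of_bothTranslateAt (h0 : Function.LeftInverse X0i (X0fun m l))
    (h1 : Function.LeftInverse X1i (X1fun m l)) (hw : BothTranslateAt m l (X1fun m l t)) :
    Sfun m l X0i X1i t = t :=
  Sfun_eq_self_of_agree (· + 1) h0 h1 hw.1 hw.2

theorem Tfun_eq_self_of_bothTranslateAt (h0 : Function.LeftInverse X0i (X0fun m l))
    (h1 : Function.LeftInverse X1i (X1fun m l)) (ht : X0fun m l t = t + 1)
    (ht' : BothTranslateAt m l (t + 1)) (hw : BothTranslateAt m l (X1fun m l t)) :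
    Tfun m l X0i X1i t = t :=
  Tfun_eq_self_of_agree (· + 1) h0 h1 ht ht'.1 ht'.2 hw.1 hw.2

theorem S_T_eq_self_of_lt_of_le (h0 : Function.LeftInverse X0i (X0fun m l))
    (h1 : Function.LeftInverse X1i (X1fun m l)) (h2t : 2 < t)
    (ht : t ≤ 4 * (l : ℝ) - 5 / 2) :
    Sfun m l X0i X1i t = t ∧ Tfun m l X0i X1i t = t := by
  have hX1 : X1fun m l t = t + 1 := X1fun_eq_add_one_of_lt_of_le h2t (by linarith)
  have hnext : BothTranslateAt m l (t + 1) :=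
    bothTranslateAt_of_lt_of_le (by linarith) (by linarith)
  exact ⟨Sfun_eq_self_of_bothTranslateAt h0 h1 (hX1 ▸ hnext),
    Tfun_eq_self_of_bothTranslateAt h0 h1 (X0fun_eq_add_one_of_lt_of_le (by linarith)
      (by linarith)) hnext (hX1 ▸ hnext)⟩

theorem S_T_eq_self_of_le (h0 : Function.LeftInverse X0i (X0fun m l))
    (h1 : Function.LeftInverse X1i (X1fun m l)) (ht : 4 * (l : ℝ) + 4 * m + 3 + 1 / 8 ≤ t) :
    Sfun m l X0i X1i t = t ∧ Tfun m l X0i X1i t = t := by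
  have hw : BothTranslateAt m l (X1fun m l t) := bothTranslateAt_of_le (le_X1fun (by linarith))
  exact ⟨Sfun_eq_self_of_bothTranslateAt h0 h1 hw,
    Tfun_eq_self_of_bothTranslateAt h0 h1 (X0fun_eq_add_one_of_le (by linarith))
      (bothTranslateAt_of_le (by linarith)) hw⟩

end Support

/-- For all sufficiently large multiples `b = 4l` of `4` and all `m ≥ 1`, the supports of
`S = X_0 X_2 X_1⁻²` and `T = X_0² X_2 X_4 X_3⁻² X_1⁻¹ X_0⁻¹` inside `(b−5, ∞)` are contained
in the interval `(b − 5/2, b + 4m + 3 + 1/8)`. -/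
theorem S_T_support :
    ∃ N : ℕ, ∀ m l : ℕ, 1 ≤ m → N ≤ l → ∀ X0i X1i : ℝ → ℝ,
      Function.LeftInverse X0i (X0fun m l) → Function.RightInverse X0i (X0fun m l) →
      Function.LeftInverse X1i (X1fun m l) → Function.RightInverse X1i (X1fun m l) →
      (∀ t : ℝ, 4 * (l : ℝ) - 5 < t → Sfun m l X0i X1i t ≠ t →
        t ∈ Set.Ioo (4 * (l : ℝ) - 5 / 2) (4 * (l : ℝ) + 4 * m + 3 + 1 / 8)) ∧
      (∀ t : ℝ, 4 * (l : ℝ) - 5 < t → Tfun m l X0i X1i t ≠ t →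
        t ∈ Set.Ioo (4 * (l : ℝ) - 5 / 2) (4 * (l : ℝ) + 4 * m + 3 + 1 / 8)) := by
  refine ⟨2, fun m l _ hl X0i X1i h0 _ h1 _ => ?_⟩
  have hb : (8 : ℝ) ≤ 4 * l := by
    have : (2 : ℝ) ≤ l := by exact_mod_cast hl
    linarith
  have fixed : ∀ t : ℝ, 4 * (l : ℝ) - 5 < t →
      t ∉ Set.Ioo (4 * (l : ℝ) - 5 / 2) (4 * (l : ℝ) + 4 * m + 3 + 1 / 8) →
      Sfun m l X0i X1i t = t ∧ Tfun m l X0i X1i t = t := by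
    intro t ht hout
    rw [Set.mem_Ioo, not_and_or, not_lt, not_lt] at hout
    rcases hout with hleft | hright
    · exact S_T_eq_self_of_lt_of_le h0 h1 (by linarith) hleft
    · exact S_T_eq_self_of_le h0 h1 hright
  exact ⟨fun t ht hS => by_contra fun hout => hS (fixed t ht hout).1,
    fun t ht hT => by_contra fun hout => hT (fixed t ht hout).2⟩
end
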